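/- arXiv:1402.2011 — 3 statements merged into one kernel-verified Lean document; each statement's English description precedes it below -/
import Mathlib

section
/- With the blocks Z^l_s defined by Z^l_s = {(i,j) : j ∈ [r], i ∈ (Z/t)^r, i + (l−1)e_j = s} for l ∈ {1,…,t} and s ∈ (Z/t)^r (and t ≥ 2, r ≥ 2), every pair of distinct elements (i,j) ≠ (i',j') of the ground set lies in at most one block Z^l_s. -/
/-- Any pair of distinct elements of the ground set (Z/t)^r × [r] lies in at
most one zigzag block Z^l_s. -/
theorem stmt_9 (t r : ℕ) (ht : 2 ≤ t) (hr : 2 ≤ r)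
    (Z : Fin t → (Fin r → ZMod t) → Set ((Fin r → ZMod t) × Fin r))
    (hZ : ∀ l s, Z l s = {p : (Fin r → ZMod t) × Fin r |
      p.1 + (Pi.single p.2 (((l : ℕ)) : ZMod t) : Fin r → ZMod t) = s}) :
    ∀ p p' : (Fin r → ZMod t) × Fin r, p ≠ p' →
      ∀ l l' s s', p ∈ Z l s → p' ∈ Z l s → p ∈ Z l' s' → p' ∈ Z l' s' →
        l = l' ∧ s = s' := by
  intro p p' hne l l' s s' h1 h2 h3 h4
  simp only [hZ, Set.mem_setOf_eq] at h1 h2 h3 h4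
  have key : p.1 + Pi.single p.2 ((l : ℕ) : ZMod t) =
      p'.1 + Pi.single p'.2 ((l : ℕ) : ZMod t) := h1.trans h2.symm
  have key' : p.1 + Pi.single p.2 ((l' : ℕ) : ZMod t) =
      p'.1 + Pi.single p'.2 ((l' : ℕ) : ZMod t) := h3.trans h4.symm
  have hll : l = l' := by
    by_cases hj : p.2 = p'.2
    · exfalso
      apply hne
      have h11 : p.1 = p'.1 := by
        have := key
        rw [hj] at this
        exact add_right_cancel this
      exact Prod.ext h11 hj
    · have e1 := congrFun key p.2
      have e2 := congrFun key' p.2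
      simp [Pi.single_apply, hj, Ne.symm hj] at e1 e2
      have hc : ((l : ℕ) : ZMod t) = ((l' : ℕ) : ZMod t) := by
        have := e1.trans e2.symm
        exact add_left_cancel this
      have := (ZMod.natCast_eq_natCast_iff _ _ _).mp hc
      have : (l : ℕ) = (l' : ℕ) := by
        have h1' := l.isLt
        have h2' := l'.isLt
        unfold Nat.ModEq at this
        rwa [Nat.mod_eq_of_lt h1', Nat.mod_eq_of_lt h2'] at this
      exact Fin.ext this
  refine ⟨hll, ?_⟩
  rw [← h1, ← h3, hll]
end

section
/- Suppose r, t, k are positive integers with k = r·t^r. Then there exists a k × (t^{r+1}) matrix R with entries in {0,1} such that: (i) each column of R has exactly r nonzero entries; (ii) the columns can be grouped into t groups of t^r columns each, such that within each group the column supports partition [k]; and (iii) any two distinct rows of R have at most one common column in which both have a 1. -/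
open Finset

lemma card_filter_equiv_comp {α β : Type*} [Fintype α] [Fintype β]
    (e : α ≃ β) (P : β → Prop) [DecidablePred P] :
    (univ.filter (fun a => P (e a))).card = (univ.filter P).card := by
  rw [← Fintype.card_subtype, ← Fintype.card_subtype]
  exact Fintype.card_congr (e.subtypeEquiv (fun a => Iff.rfl))

/-- For k = r·t^r there exists a k × t^{r+1} 0/1 matrix whose columns all have
exactly r ones, whose columns split into t groups of t^r columns each with
supports partitioning [k], and in which any two distinct rows share at most
one common support position. -/
theorem stmt_10 (r t k : ℕ) (hr : 0 < r) (ht : 0 < t) (hk : k = r * t ^ r) :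
    ∃ R : Fin k → Fin (t ^ (r + 1)) → Bool,
      (∀ j, (Finset.univ.filter (fun i => R i j = true)).card = r) ∧
      (∃ g : Fin (t ^ (r + 1)) → Fin t,
        (∀ c, (Finset.univ.filter (fun j => g j = c)).card = t ^ r) ∧
        (∀ c, ∀ i, ∃! j, g j = c ∧ R i j = true)) ∧
      (∀ i i', i ≠ i' →
        (Finset.univ.filter (fun j => R i j = true ∧ R i' j = true)).card ≤ 1) := by
  haveI : NeZero t := ⟨ht.ne'⟩
  -- abstract row/column types
  have hcα : Fintype.card (Fin r × (Fin r → ZMod t)) = k := by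
    simp [hk, ZMod.card]
  have hcβ : Fintype.card (ZMod t × (Fin r → ZMod t)) = t ^ (r + 1) := by
    simp [ZMod.card, pow_succ, mul_comm]
  let er : (Fin r × (Fin r → ZMod t)) ≃ Fin k := Fintype.equivFinOfCardEq hcα
  let ec : (ZMod t × (Fin r → ZMod t)) ≃ Fin (t ^ (r + 1)) := Fintype.equivFinOfCardEq hcβ
  let et : ZMod t ≃ Fin t := Fintype.equivFinOfCardEq (ZMod.card t)
  let R' : (Fin r × (Fin r → ZMod t)) → (ZMod t × (Fin r → ZMod t)) → Bool :=
    fun p q => decide (∀ jx, q.2 jx = p.2 jx + if jx = p.1 then q.1 else 0)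
  have hR' : ∀ p q, R' p q = true ↔ ∀ jx, q.2 jx = p.2 jx + if jx = p.1 then q.1 else 0 := by
    intro p q; simp [R']
  refine ⟨fun i j => R' (er.symm i) (ec.symm j), ?_, ⟨fun j => et (ec.symm j).1, ?_, ?_⟩, ?_⟩
  · -- (i) each column has exactly r ones
    intro j
    rw [card_filter_equiv_comp er.symm (fun p => R' p (ec.symm j) = true)]
    set q := ec.symm j
    refine (Finset.card_bij' (fun p _ => p.1)
      (fun b _ => ((b, fun jx => q.2 jx - if jx = b then q.1 else 0) :
        Fin r × (Fin r → ZMod t))) ?_ ?_ ?_ ?_).trans (Finset.card_fin r)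
    · intro p _
      exact mem_univ _
    · intro b _
      simp only [mem_filter, mem_univ, true_and, hR']
      intro jx
      simp
    · intro p hp
      simp only [mem_filter, mem_univ, true_and, hR'] at hp
      refine Prod.ext rfl ?_
      funext jx
      simp [hp jx]
    · intro b _
      rfl
  · -- (ii) group sizes
    intro c
    rw [card_filter_equiv_comp ec.symm (fun q => et q.1 = c)]
    rw [← Fintype.card_subtype]
    have e2 : {q : ZMod t × (Fin r → ZMod t) // et q.1 = c} ≃ (Fin r → ZMod t) :=
      { toFun := fun q => q.1.2
        invFun := fun s => ⟨(et.symm c, s), by simp⟩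
        left_inv := by
          rintro ⟨⟨l, s⟩, h⟩
          apply Subtype.ext
          exact Prod.ext (by simpa using (congrArg et.symm h).symm) rfl
        right_inv := fun s => rfl }
    rw [Fintype.card_congr e2]
    simp [ZMod.card]
  · -- (ii) unique column in each group covering each row
    intro c i
    set p := er.symm i with hp
    refine ⟨ec (et.symm c, fun jx => p.2 jx + if jx = p.1 then et.symm c else 0), ?_, ?_⟩
    · constructor
      · simp
      · show R' (er.symm i) (ec.symm (ec _)) = true
        rw [Equiv.symm_apply_apply, hR']
        intro jx; rfl
    · rintro j' ⟨hg, hRj⟩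
      set q := ec.symm j' with hq
      have hq1 : q.1 = et.symm c := by
        have := congrArg et.symm hg; simpa using this
      simp only [hR'] at hRj
      have : q = (et.symm c, fun jx => p.2 jx + if jx = p.1 then et.symm c else 0) := by
        refine Prod.ext hq1 ?_
        funext jx
        rw [hRj jx, hq1]
      rw [hq] at this
      calc j' = ec (ec.symm j') := (ec.apply_symm_apply j').symm
        _ = _ := congrArg ec this
  · -- (iii) two distinct rows share at most one column
    intro i i' hne
    set p := er.symm i
    set p' := er.symm i'
    have hpp' : p ≠ p' := fun h => hne (er.symm.injective h)
    rw [Finset.card_le_one]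
    intro j1 hj1 j2 hj2
    simp only [mem_filter, mem_univ, true_and, hR'] at hj1 hj2
    obtain ⟨h1, h1'⟩ := hj1
    obtain ⟨h2, h2'⟩ := hj2
    set q1 := ec.symm j1 with hq1
    set q2 := ec.symm j2 with hq2
    -- show q1 = q2
    have key : q1 = q2 := by
      by_cases hb : p.1 = p'.1
      · -- then p.2 = p'.2, contradiction
        exfalso
        apply hpp'
        refine Prod.ext hb ?_
        funext jx
        have e1 := (h1 jx).symm.trans (h1' jx)
        rw [hb] at e1
        exact add_right_cancel e1
      · -- first coordinates of q1, q2 are determined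
        have hl : ∀ q : ZMod t × (Fin r → ZMod t),
            (∀ jx, q.2 jx = p.2 jx + if jx = p.1 then q.1 else 0) →
            (∀ jx, q.2 jx = p'.2 jx + if jx = p'.1 then q.1 else 0) →
            q.1 = p'.2 p.1 - p.2 p.1 := by
          intro q ha hb'
          have e1 := (ha p.1).symm.trans (hb' p.1)
          rw [if_pos rfl, if_neg hb, add_zero] at e1
          linear_combination e1
        have hl1 := hl q1 h1 h1'
        have hl2 := hl q2 h2 h2'
        have hfst : q1.1 = q2.1 := hl1.trans hl2.symm
        refine Prod.ext hfst ?_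
        funext jx
        rw [h1 jx, h2 jx, hfst]
    calc j1 = ec (ec.symm j1) := (ec.apply_symm_apply j1).symm
      _ = ec (ec.symm j2) := congrArg ec key
      _ = j2 := ec.apply_symm_apply j2
end

section
/- Let k, r, t, N be positive integers with r | k, and suppose there exists a k × (tk/r) 0/1 matrix R such that its columns split into t groups whose supports partition [k] within each group, each column has exactly r ones, and any two rows share at most one common support position. Let n = N + tk/r. Then any code of length n, dimension k, constructed by the Pyramid-splitting construction from an (N+t, k) MDS code using R has minimum distance exactly n − k − ⌈kt/r⌉ + t + 1 = N − k + t + 1. -/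
/-!
A set of columns of `G` fails to span `F^k` exactly when some nonzero message `x` is orthogonal
to all of them, so the quantity in question is the least Hamming weight of a nonzero codeword
`x ᵥ* G`. Summing the `k / r` split copies of a parity column gives back that column of `Ĝ`, so
every nonzero parity coordinate of `x ᵥ* Ĝ` leaves at least one nonzero split coordinate, and
`wt (x ᵥ* G) ≥ wt (x ᵥ* Ĝ) ≥ N + t - k + 1` by the MDS property. Conversely the row of `G` of an
information symbol has at most `N - k + 1` nonzero entries among the first `N` columns (systematic
form) and at most one per group among the split columns (each group partitions `[k]`), so the
bound is attained.
-/

open Finset Matrix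

section HammingWeight

variable {M : Type*} [AddCommMonoid M] [DecidableEq M]

theorem hammingNorm_add_card_filter_eq_zero {ι : Type*} [Fintype ι] (v : ι → M) :
    hammingNorm v + #{j | v j = 0} = Fintype.card ι := by
  rw [hammingNorm, add_comm, card_filter_add_card_filter_not, card_univ]

theorem hammingNorm_sum_elim {α β : Type*} [Fintype α] [Fintype β] (c : α ⊕ β → M) :
    hammingNorm c = hammingNorm (c ∘ Sum.inl) + hammingNorm (c ∘ Sum.inr) := by
  simp only [hammingNorm, card_filter, Fintype.sum_sum_type, Function.comp_apply]

theorem hammingNorm_fin_add {m n : ℕ} (c : Fin (m + n) → M) :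
    hammingNorm c = hammingNorm (c ∘ Fin.castAdd n) + hammingNorm (c ∘ Fin.natAdd m) := by
  simp only [hammingNorm, card_filter, Fin.sum_univ_add, Function.comp_apply]

theorem hammingNorm_le_of_sum_eq {β γ : Type*} [Fintype β] [Fintype γ]
    (c : β × γ → M) (c' : β → M) (h : ∀ b, ∑ g, c (b, g) = c' b) :
    hammingNorm c' ≤ hammingNorm c := by
  simp only [hammingNorm, card_filter, Fintype.sum_prod_type]
  refine sum_le_sum fun b _ => ?_
  split_ifs with hb
  · rw [← h b] at hb
    obtain ⟨g, -, hg⟩ := exists_ne_zero_of_sum_ne_zero hb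
    simpa [hg] using single_le_sum (f := fun g => if c (b, g) ≠ 0 then 1 else 0)
      (fun _ _ => Nat.zero_le _) (mem_univ g)
  · exact Nat.zero_le _

theorem hammingNorm_le_card_of_subsingleton {β γ : Type*} [Fintype β] [Fintype γ]
    (c : β × γ → M) (hc : ∀ b g g', c (b, g) ≠ 0 → c (b, g') ≠ 0 → g = g') :
    hammingNorm c ≤ Fintype.card β := by
  refine card_le_card_of_injOn Prod.fst (fun _ _ => mem_coe.2 (mem_univ _)) ?_
  rintro ⟨b, g⟩ hg ⟨b', g'⟩ hg' (rfl : b = b')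
  simp only [coe_filter, mem_univ, true_and, Set.mem_ofPred_eq] at hg hg'
  rw [hc b g g' hg hg']

theorem hammingNorm_le_of_eq_zero_castLE {k m : ℕ} (h : k ≤ m) (v : Fin m → M) (i : Fin k)
    (hv : ∀ j ≠ i, v (Fin.castLE h j) = 0) : hammingNorm v ≤ m - k + 1 := by
  have hzero : (univ.erase i).map (Fin.castLEEmb h) ⊆ univ.filter fun j => v j = 0 := by
    intro j hj
    obtain ⟨l, hl, rfl⟩ := mem_map.1 hj
    simpa using hv l (ne_of_mem_erase hl)
  have := card_le_card hzero
  rw [card_map, card_erase_of_mem (mem_univ i), card_univ, Fintype.card_fin] at this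
  have := hammingNorm_add_card_filter_eq_zero v
  rw [Fintype.card_fin] at this
  have := i.pos
  omega

end HammingWeight

theorem Finset.sum_sum_ite_mem_of_existsUnique {α β M : Type*} [Fintype α] [DecidableEq α]
    [Fintype β] [AddCommMonoid M] (R : β → Finset α) (hR : ∀ i, ∃! b, i ∈ R b) (f : α → M) :
    ∑ b, ∑ i, (if i ∈ R b then f i else 0) = ∑ i, f i := by
  rw [sum_comm]
  refine sum_congr rfl fun i _ => ?_
  obtain ⟨b, hb, huniq⟩ := hR i
  rw [sum_eq_single b (fun b' _ hb' => if_neg fun h => hb' (huniq b' h)) (by simp), if_pos hb]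

section Duality

variable {F κ : Type*} [Field F] [Fintype κ] [DecidableEq κ]

theorem Submodule.span_ne_top_iff_exists_dotProduct_eq_zero {s : Set (κ → F)} :
    span F s ≠ ⊤ ↔ ∃ x ≠ 0, ∀ v ∈ s, x ⬝ᵥ v = 0 := by
  constructor
  · intro hs
    obtain ⟨φ, hφ, hφs⟩ := exists_dual_map_eq_bot_of_lt_top hs.lt_top inferInstance
    refine ⟨(dotProductEquiv F κ).symm φ, by simpa using hφ, fun v hv => ?_⟩
    have : φ v ∈ (span F s).map φ := mem_map_of_mem (subset_span hv)
    rw [hφs, mem_bot] at this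
    rwa [← dotProductEquiv_apply_apply, LinearEquiv.apply_symm_apply]
  · rintro ⟨x, hx, hxs⟩ hs
    refine hx (funext fun i => ?_)
    have hle : span F s ≤ LinearMap.ker (dotProductEquiv F κ x) :=
      span_le.2 fun v hv => hxs v hv
    simpa using hle (hs.symm ▸ mem_top : Pi.single i 1 ∈ span F s)

theorem span_columns_ne_top_iff {ι : Type*} (G : Matrix κ ι F) (S : Set ι) :
    Submodule.span F ((fun j => fun i => G i j) '' S) ≠ ⊤ ↔
      ∃ x ≠ 0, ∀ j ∈ S, (x ᵥ* G) j = 0 := by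
  simp only [Submodule.span_ne_top_iff_exists_dotProduct_eq_zero, Set.forall_mem_image]
  rfl

end Duality

section MinimumDistance

variable {F ι κ : Type*} [Field F] [DecidableEq F] [Fintype ι] [Fintype κ] [DecidableEq κ]

theorem card_sub_card_lt_hammingNorm_vecMul (G : Matrix κ ι F)
    (hκι : Fintype.card κ ≤ Fintype.card ι)
    (hG : ∀ S : Finset ι, S.card = Fintype.card κ →
      LinearIndependent F (fun j : S => fun i => G i j))
    {x : κ → F} (hx : x ≠ 0) : Fintype.card ι - Fintype.card κ < hammingNorm (x ᵥ* G) := by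
  by_contra! hle
  have := hammingNorm_add_card_filter_eq_zero (x ᵥ* G)
  obtain ⟨S, hSzero, hScard⟩ :=
    exists_subset_card_eq (s := univ.filter fun j => (x ᵥ* G) j = 0) (n := Fintype.card κ)
      (by omega)
  have hspan : Submodule.span F ((fun j => fun i => G i j) '' (S : Set ι)) = ⊤ := by
    rw [Set.image_eq_range]
    exact (hG S hScard).span_eq_top_of_card_eq_finrank'
      (by rw [Fintype.card_coe, hScard, Module.finrank_fintype_fun_eq_card])
  exact (span_columns_ne_top_iff G S).2
    ⟨x, hx, fun j hj => (mem_filter.1 (hSzero hj)).2⟩ hspan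

theorem card_sub_sSup_card_nonspanning_eq (G : Matrix κ ι F) {d : ℕ}
    (hlow : ∀ x ≠ 0, d ≤ hammingNorm (x ᵥ* G)) (hwit : ∃ x ≠ 0, hammingNorm (x ᵥ* G) ≤ d) :
    Fintype.card ι - sSup {m : ℕ | ∃ S : Finset ι, S.card = m ∧
      Submodule.span F ((fun j => fun i => G i j) '' ↑S) ≠ ⊤} = d := by
  set nonspanning := {m : ℕ | ∃ S : Finset ι, S.card = m ∧
      Submodule.span F ((fun j => fun i => G i j) '' ↑S) ≠ ⊤}
  have hle : ∀ m ∈ nonspanning, m ≤ Fintype.card ι - d := by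
    rintro m ⟨S, rfl, hS⟩
    obtain ⟨x, hx, hxS⟩ := (span_columns_ne_top_iff G S).1 hS
    have hsub : S ⊆ univ.filter fun j => (x ᵥ* G) j = 0 :=
      fun j hj => mem_filter.2 ⟨mem_univ j, hxS j hj⟩
    have hzeros := hammingNorm_add_card_filter_eq_zero (x ᵥ* G)
    have := card_le_card hsub
    have := hlow x hx
    omega
  obtain ⟨x, hx, hxd⟩ := hwit
  have hmem : Fintype.card ι - hammingNorm (x ᵥ* G) ∈ nonspanning := by
    refine ⟨univ.filter fun j => (x ᵥ* G) j = 0, ?_, ?_⟩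
    · have := hammingNorm_add_card_filter_eq_zero (x ᵥ* G)
      omega
    · exact (span_columns_ne_top_iff G _).2 ⟨x, hx, fun j hj => (mem_filter.1 hj).2⟩
  have := le_csSup ⟨_, hle⟩ hmem
  have := csSup_le ⟨_, hmem⟩ hle
  have := hlow x hx
  have : hammingNorm (x ᵥ* G) ≤ Fintype.card ι := hammingNorm_le_card_fintype
  omega

end MinimumDistance

section PyramidSplitting

variable {F γ : Type*} [Semiring F] [DecidableEq F] [Fintype γ] {N t k : ℕ}

structure IsPyramidSplitting (Ghat : Matrix (Fin k) (Fin (N + t)) F)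
    (R : Fin t → γ → Finset (Fin k)) (G : Matrix (Fin k) (Fin N ⊕ Fin t × γ) F) : Prop where
  existsUnique_mem : ∀ a i, ∃! b, i ∈ R a b
  apply_inl : ∀ i j, G i (Sum.inl j) = Ghat i (Fin.castAdd t j)
  apply_inr : ∀ i a b, G i (Sum.inr (a, b)) = if i ∈ R a b then Ghat i (Fin.natAdd N a) else 0

namespace IsPyramidSplitting

variable {Ghat : Matrix (Fin k) (Fin (N + t)) F} {R : Fin t → γ → Finset (Fin k)}
  {G : Matrix (Fin k) (Fin N ⊕ Fin t × γ) F}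

theorem hammingNorm_vecMul_le (h : IsPyramidSplitting Ghat R G) (x : Fin k → F) :
    hammingNorm (x ᵥ* Ghat) ≤ hammingNorm (x ᵥ* G) := by
  rw [hammingNorm_fin_add, hammingNorm_sum_elim]
  refine add_le_add (le_of_eq (congrArg hammingNorm (funext fun j => ?_)))
    (hammingNorm_le_of_sum_eq _ _ fun a => ?_)
  · simp only [Function.comp_apply, vecMul, dotProduct, h.apply_inl]
  · simp only [Function.comp_apply, vecMul, dotProduct, h.apply_inr, mul_ite, mul_zero]
    exact sum_sum_ite_mem_of_existsUnique (R a) (h.existsUnique_mem a) _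

theorem hammingNorm_row_le (h : IsPyramidSplitting Ghat R G) (hkt : k ≤ N + t) (hkN : k ≤ N)
    (hsys : ∀ i j : Fin k, Ghat i (Fin.castLE hkt j) = if i = j then 1 else 0) (i : Fin k) :
    hammingNorm (G i) ≤ N - k + 1 + t := by
  rw [hammingNorm_sum_elim]
  refine add_le_add (hammingNorm_le_of_eq_zero_castLE hkN _ i fun j hj => ?_) ?_
  · simp only [Function.comp_apply, h.apply_inl]
    exact (hsys i j).trans (if_neg hj.symm)
  · have hsupp : ∀ a b, G i (Sum.inr (a, b)) ≠ 0 → i ∈ R a b := fun a b hb => by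
      by_contra hi
      exact hb (by rw [h.apply_inr, if_neg hi])
    simpa using hammingNorm_le_card_of_subsingleton (G i ∘ Sum.inr) fun a b b' hb hb' =>
      (h.existsUnique_mem a i).unique (hsupp a b hb) (hsupp a b' hb')

end IsPyramidSplitting

end PyramidSplitting

/-- Construction I (Pyramid splitting of the last t parities of an (N+t,k) MDS
code according to a matrix R with t partition groups, column weight r and
pairwise row intersections of size ≤ 1) yields a code of length
n = N + t·k/r whose minimum distance (length minus the largest cardinality of
a set of columns not spanning everything) equals N − k + t + 1
= n − k − ⌈kt/r⌉ + t + 1. -/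
theorem stmt_14 {F : Type*} [Field F] (N t k r : ℕ)
    (hk : 0 < k) (hkN : k ≤ N)
    (Ghat : Matrix (Fin k) (Fin (N + t)) F)
    (hsys : ∀ i j : Fin k,
      Ghat i (Fin.castLE (by omega) j) = if i = j then 1 else 0)
    (hMDS : ∀ S : Finset (Fin (N + t)), S.card = k →
      LinearIndependent F (fun j : S => (fun i : Fin k => Ghat i j.1)))
    (Rcol : Fin t → Fin (k / r) → Finset (Fin k))
    (hRpart : ∀ (a : Fin t) (i : Fin k), ∃! b, i ∈ Rcol a b)
    (G : Matrix (Fin k) (Fin N ⊕ Fin t × Fin (k / r)) F)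
    (hG1 : ∀ (i : Fin k) (j : Fin N),
      G i (Sum.inl j) = Ghat i (Fin.castLE (by omega) j))
    (hG2 : ∀ (i : Fin k) (a : Fin t) (b : Fin (k / r)),
      G i (Sum.inr (a, b)) =
        if i ∈ Rcol a b then Ghat i ⟨N + a, by have := a.isLt; omega⟩ else 0) :
    (N + t * (k / r)) -
      sSup {m : ℕ | ∃ S : Finset (Fin N ⊕ Fin t × Fin (k / r)), S.card = m ∧
        Submodule.span F ((fun j => fun i : Fin k => G i j) '' ↑S) ≠ ⊤}
      = N - k + t + 1 := by
  classical
  have hG : IsPyramidSplitting Ghat Rcol G := ⟨hRpart, hG1, hG2⟩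
  have hcard : Fintype.card (Fin N ⊕ Fin t × Fin (k / r)) = N + t * (k / r) := by simp
  rw [← hcard]
  apply card_sub_sSup_card_nonspanning_eq
  · intro x hx
    have hMDS_weight := card_sub_card_lt_hammingNorm_vecMul Ghat
      (by simp only [Fintype.card_fin]; omega) (fun S hS => hMDS S (by simpa using hS)) hx
    have hsplit := hG.hammingNorm_vecMul_le x
    simp only [Fintype.card_fin] at hMDS_weight
    omega
  · refine ⟨Pi.single ⟨0, hk⟩ 1, by simp, ?_⟩
    rw [single_one_vecMul]
    exact (hG.hammingNorm_row_le _ hkN hsys ⟨0, hk⟩).trans_eq (by omega)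
end
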